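/- arXiv:2507.11871 — 2 statements merged into one kernel-verified Lean document; each statement's English description precedes it below -/
import Mathlib

section
/- Let n ≥ 6 be an integer and let p and q be primes such that pq divides n and pq is coprime to n/pq. Let S be an inverse-closed subset of ℤ_n∖{0} such that ⟨S⟩ = ℤ_n, |S| = pq, and S is periodic. Then Cay(ℤ_n, S) admits a total perfect code if and only if s ≢ s′ (mod pq) for any two distinct s, s′ ∈ S. -/
open Finset Polynomial

/-- The Cayley graph of an additive group `G` with connection set `S`.
(When `S` is inverse-closed and does not contain `0`, `x` and `y` are adjacent
iff `y - x ∈ S`.) -/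
def cayley {G : Type*} [AddGroup G] (S : Set G) : SimpleGraph G :=
  SimpleGraph.fromRel (fun x y => y - x ∈ S)

/-- A perfect code in a graph: an independent set such that every vertex outside it
has exactly one neighbour in it. -/
def IsPerfectCode {V : Type*} (Γ : SimpleGraph V) (C : Set V) : Prop :=
  (∀ x ∈ C, ∀ y ∈ C, ¬ Γ.Adj x y) ∧ ∀ v, v ∉ C → ∃! c, c ∈ C ∧ Γ.Adj v c

/-- A total perfect code in a graph: every vertex has exactly one neighbour in it. -/
def IsTotalPerfectCode {V : Type*} (Γ : SimpleGraph V) (C : Set V) : Prop :=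
  ∀ v, ∃! c, c ∈ C ∧ Γ.Adj v c

/-- The subgroup of periods of a subset `X` of an abelian group:
`{g | X + g = X}`. -/
def periods {G : Type*} [AddCommGroup G] (X : Set G) : AddSubgroup G where
  carrier := {g | ∀ x : G, x + g ∈ X ↔ x ∈ X}
  zero_mem' := by simp
  add_mem' := by
    intro a b ha hb x
    rw [← add_assoc]
    exact (hb _).trans (ha x)
  neg_mem' := by
    intro a ha x
    have := ha (x + -a)
    simpa using this.symm

/-- `(A, B)` is a factorization of the abelian group `G`: every element of `G` can be
uniquely written as `a + b` with `a ∈ A` and `b ∈ B`. -/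
def IsFactorization {G : Type*} [AddCommGroup G] (A B : Set G) : Prop :=
  ∀ g : G, ∃! ab : G × G, ab.1 ∈ A ∧ ab.2 ∈ B ∧ ab.1 + ab.2 = g

/-- An abelian group is good if in every factorization of it into two factors
at least one factor is periodic. -/
def IsGood (G : Type*) [AddCommGroup G] : Prop :=
  ∀ A B : Set G, IsFactorization A B → periods A ≠ ⊥ ∨ periods B ≠ ⊥

private lemma geom_zero' {N : ℕ} {z : ℂ} (hz1 : z ≠ 1) (hzN : z ^ N = 1) :
    ∑ i ∈ Finset.range N, z ^ i = 0 := by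
  rw [geom_sum_eq hz1, hzN, sub_self, zero_div]

private lemma pow_mod_eq' {w : ℂ} {N : ℕ} (hw : w ^ N = 1) (k : ℕ) : w ^ (k % N) = w ^ k := by
  conv_rhs => rw [← Nat.mod_add_div k N]
  rw [pow_add, pow_mul, hw, one_pow, mul_one]

private lemma sum_val_pow' {n : ℕ} [NeZero n] (z : ℂ) :
    ∑ x : ZMod n, z ^ x.val = ∑ i ∈ Finset.range n, z ^ i := by
  apply Finset.sum_bij (fun (x : ZMod n) _ => x.val)
  · intro a _; exact Finset.mem_range.2 a.val_lt
  · intro a _ b _ h; exact ZMod.val_injective n h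
  · intro b hb; exact ⟨(b : ZMod n), Finset.mem_univ _, ZMod.val_cast_of_lt (Finset.mem_range.1 hb)⟩
  · intros; rfl

private lemma prime_dvd_card_of_vanishing_sum' {o : ℕ} (ho : o.Prime) {w : ℂ}
    (hw : IsPrimitiveRoot w o) {α : Type*} (F : Finset α) (f : α → ℕ)
    (hsum : ∑ a ∈ F, w ^ (f a) = 0) : o ∣ F.card := by
  haveI : Fact o.Prime := ⟨ho⟩
  have hwo : w ^ o = 1 := hw.pow_eq_one
  set P : Polynomial ℤ := ∑ a ∈ F, Polynomial.X ^ (f a % o) with hP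
  have hwP : Polynomial.aeval w P = 0 := by
    rw [hP, map_sum, ← hsum]
    apply Finset.sum_congr rfl
    intro a _
    rw [map_pow, Polynomial.aeval_X, pow_mod_eq' hwo]
  have hmin : Polynomial.cyclotomic o ℤ = minpoly ℤ w := Polynomial.cyclotomic_eq_minpoly hw ho.pos
  have hdvd : minpoly ℤ w ∣ P := minpoly.isIntegrallyClosed_dvd (hw.isIntegral ho.pos) hwP
  rw [← hmin] at hdvd
  obtain ⟨Q, hQ⟩ := hdvd
  have heval : P.eval 1 = (F.card : ℤ) := by
    rw [hP, Polynomial.eval_finset_sum]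
    simp
  have h2 : (F.card : ℤ) = (o : ℤ) * Q.eval 1 := by
    rw [← heval, hQ, Polynomial.eval_mul, Polynomial.eval_one_cyclotomic_prime]
  have h3 : (o : ℤ) ∣ (F.card : ℤ) := ⟨Q.eval 1, h2⟩
  exact_mod_cast h3

private lemma zsmul_emod' {G : Type*} [AddGroup G] (h : G) (a : ℤ) :
    (a % (addOrderOf h : ℤ)) • h = a • h := by
  conv_rhs => rw [← Int.emod_add_mul_ediv a (addOrderOf h : ℤ), add_zsmul,
    mul_comm ((addOrderOf h : ℤ)), mul_zsmul, natCast_zsmul, addOrderOf_nsmul_eq_zero,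
    smul_zero, add_zero]

private lemma addOrder_dvd_ncard' {n : ℕ} [NeZero n] {S : Set (ZMod n)} {h : ZMod n}
    (hh : ∀ x, x + h ∈ S ↔ x ∈ S) : addOrderOf h ∣ S.ncard := by
  classical
  set ℓ := addOrderOf h with hℓ
  have hℓ0 : 0 < ℓ := addOrderOf_pos h
  set T := (Set.toFinite S).toFinset with hT
  have hmemT : ∀ x, x ∈ T ↔ x ∈ S := fun x => Set.Finite.mem_toFinset _
  have hstep : ∀ (x : ZMod n), ∀ j : ℕ, x ∈ S → x + j • h ∈ S := by
    intro x j hx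
    induction j with
    | zero => simpa using hx
    | succ j ih =>
      have he : x + (j + 1) • h = (x + j • h) + h := by rw [succ_nsmul]; abel
      rw [he]
      exact (hh _).2 ih
  have key : ∀ s ∈ T, (T.filter (fun x => (QuotientAddGroup.mk x :
      ZMod n ⧸ AddSubgroup.zmultiples h) = QuotientAddGroup.mk s)).card = ℓ := by
    intro s hsT
    rw [eq_comm, ← Finset.card_range ℓ]
    apply Finset.card_bij (fun (j : ℕ) (_ : j ∈ Finset.range ℓ) => s + j • h)
    · intro j hj
      rw [Finset.mem_filter]
      refine ⟨(hmemT _).2 (hstep s j ((hmemT s).1 hsT)), ?_⟩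
      rw [QuotientAddGroup.eq, AddSubgroup.mem_zmultiples_iff]
      exact ⟨-(j : ℤ), by rw [neg_zsmul, natCast_zsmul]; abel⟩
    · intro j hj j' hj' heq
      have hjj : j • h = j' • h := add_left_cancel heq
      rcases le_total j j' with hle | hle
      · have h1 : (j' - j) • h = 0 := by rw [sub_nsmul _ hle, hjj]; simp
        have h2 : ℓ ∣ j' - j := addOrderOf_dvd_iff_nsmul_eq_zero.2 h1
        have h3 := Finset.mem_range.1 hj'
        rcases Nat.eq_zero_of_dvd_of_lt h2 (by omega) with h4
        omega
      · have h1 : (j - j') • h = 0 := by rw [sub_nsmul _ hle, hjj]; simp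
        have h2 : ℓ ∣ j - j' := addOrderOf_dvd_iff_nsmul_eq_zero.2 h1
        have h3 := Finset.mem_range.1 hj
        rcases Nat.eq_zero_of_dvd_of_lt h2 (by omega) with h4
        omega
    · intro x hx
      rw [Finset.mem_filter] at hx
      obtain ⟨hxT, hxq⟩ := hx
      rw [QuotientAddGroup.eq, AddSubgroup.mem_zmultiples_iff] at hxq
      obtain ⟨k, hk⟩ := hxq
      have h1 : (0 : ℤ) ≤ (-k) % (ℓ : ℤ) := Int.emod_nonneg _ (by exact_mod_cast hℓ0.ne')
      have h2 : (-k) % (ℓ : ℤ) < (ℓ : ℤ) := Int.emod_lt_of_pos _ (by exact_mod_cast hℓ0)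
      refine ⟨((-k) % (ℓ : ℤ)).toNat, Finset.mem_range.2 (by omega), ?_⟩
      have hsm : (((-k) % (ℓ : ℤ)).toNat : ℕ) • h = (-k) • h := by
        rw [← natCast_zsmul, Int.toNat_of_nonneg h1, zsmul_emod']
      rw [hsm, neg_zsmul, hk]
      abel
  have hcount := Finset.card_eq_sum_card_fiberwise
    (f := fun x => (QuotientAddGroup.mk x : ZMod n ⧸ AddSubgroup.zmultiples h))
    (s := T) (t := T.image (fun x => (QuotientAddGroup.mk x : ZMod n ⧸ AddSubgroup.zmultiples h)))
    (fun x hx => Finset.mem_image_of_mem _ hx)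
  have hsum : ∑ b ∈ T.image (fun x => (QuotientAddGroup.mk x : ZMod n ⧸ AddSubgroup.zmultiples h)),
      (T.filter (fun a => (QuotientAddGroup.mk a : ZMod n ⧸ AddSubgroup.zmultiples h) = b)).card
      = ∑ _b ∈ T.image (fun x => (QuotientAddGroup.mk x : ZMod n ⧸ AddSubgroup.zmultiples h)), ℓ := by
    apply Finset.sum_congr rfl
    intro b hb
    obtain ⟨s, hsT, rfl⟩ := Finset.mem_image.1 hb
    exact key s hsT
  rw [hsum, Finset.sum_const, smul_eq_mul] at hcount
  rw [Set.ncard_eq_toFinset_card S (Set.toFinite S), ← hT, hcount]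
  exact dvd_mul_left ℓ _

private lemma dvd_prime_mul_prime' {p q d : ℕ} (hp : p.Prime) (hq : q.Prime)
    (hd : d ∣ p * q) : d = 1 ∨ d = p ∨ d = q ∨ d = p * q := by
  by_cases hpd : p ∣ d
  · obtain ⟨e, rfl⟩ := hpd
    have he : e ∣ q := (mul_dvd_mul_iff_left hp.pos.ne').1 hd
    rcases (Nat.Prime.eq_one_or_self_of_dvd hq e he) with rfl | rfl
    · right; left; simp
    · right; right; right; rfl
  · have hcop : Nat.Coprime p d := hp.coprime_iff_not_dvd.2 hpd
    have hdq : d ∣ q := (Nat.Coprime.dvd_of_dvd_mul_left (Nat.Coprime.symm hcop) hd)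
    rcases (Nat.Prime.eq_one_or_self_of_dvd hq d hdq) with rfl | rfl
    · left; rfl
    · right; right; left; rfl

set_option maxHeartbeats 1000000 in
/-- Theorem 5.4: let `n ≥ 6` and `p, q` primes with `pq ∣ n` and `pq` coprime to
`n/pq`. Let `S` be a periodic inverse-closed generating subset of `ℤ_n ∖ {0}` with
`|S| = pq`. Then `Cay(ℤ_n, S)` admits a total perfect code iff `s ≢ s' (mod pq)`
for any two distinct `s, s' ∈ S`. -/
theorem totalPerfectCode_iff_pq_periodic (n : ℕ) (hn : 6 ≤ n)
    (p q : ℕ) (hp : p.Prime) (hq : q.Prime)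
    (hdvd : p * q ∣ n) (hcop : Nat.Coprime (p * q) (n / (p * q)))
    (S : Set (ZMod n)) (h0 : (0 : ZMod n) ∉ S) (hinv : ∀ s ∈ S, -s ∈ S)
    (hgen : AddSubgroup.closure S = ⊤) (hcard : S.ncard = p * q)
    (hper : periods S ≠ ⊥) :
    (∃ C : Set (ZMod n), IsTotalPerfectCode (cayley S) C) ↔
      ∀ s ∈ S, ∀ s' ∈ S, s ≠ s' → ¬ (s.val ≡ s'.val [MOD p * q]) := by
  classical
  haveI : NeZero n := ⟨by omega⟩
  have hpq0 : 0 < p * q := Nat.mul_pos hp.pos hq.pos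
  haveI : NeZero (p * q) := ⟨hpq0.ne'⟩
  obtain ⟨m, hm⟩ := hdvd
  have hmdiv : n / (p * q) = m := by rw [hm]; exact Nat.mul_div_cancel_left m hpq0
  have hcop' : Nat.Coprime (p * q) m := hmdiv ▸ hcop
  -- adjacency characterisation
  have hadj : ∀ v c : ZMod n, (cayley S).Adj v c ↔ c - v ∈ S := by
    intro v c
    rw [cayley, SimpleGraph.fromRel_adj]
    constructor
    · rintro ⟨hne, hcv | hvc⟩
      · exact hcv
      · have := hinv _ hvc; rwa [neg_sub] at this
    · intro hcv
      refine ⟨?_, Or.inl hcv⟩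
      rintro rfl
      rw [sub_self] at hcv
      exact h0 hcv
  -- the reduction hom mod p*q
  set ψ : ZMod n →+* ZMod (p * q) := ZMod.castHom ⟨m, hm⟩ (ZMod (p * q)) with hψ
  have hmodiff : ∀ a b : ZMod n, (a.val ≡ b.val [MOD p * q]) ↔ ψ a = ψ b := by
    intro a b
    have h1 : ((a.val : ℕ) : ZMod (p * q)) = ψ a := by
      rw [ZMod.natCast_val, hψ, ZMod.castHom_apply]
    have h2 : ((b.val : ℕ) : ZMod (p * q)) = ψ b := by
      rw [ZMod.natCast_val, hψ, ZMod.castHom_apply]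
    rw [← h1, ← h2, ZMod.natCast_eq_natCast_iff]
  set TS : Finset (ZMod n) := (Set.toFinite S).toFinset with hTS
  have hmemTS : ∀ x, x ∈ TS ↔ x ∈ S := fun x => Set.Finite.mem_toFinset _
  have hTScard : TS.card = p * q := by
    rw [hTS, ← Set.ncard_eq_toFinset_card S (Set.toFinite S)]; exact hcard
  -- character additivity helper
  have hfmul : ∀ (w : ℂ), w ^ n = 1 → ∀ x y : ZMod n, w ^ ((x + y).val) = w ^ x.val * w ^ y.val := by
    intro w hw x y
    rw [← pow_add, ZMod.val_add, pow_mod_eq' hw]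
  constructor
  · -- hard direction
    rintro ⟨C, hC⟩ s hs s' hs' hne hmod
    set TC : Finset (ZMod n) := (Set.toFinite C).toFinset with hTC
    have hmemTC : ∀ x, x ∈ TC ↔ x ∈ C := fun x => Set.Finite.mem_toFinset _
    have hdecomp : ∀ v : ZMod n, ∃! c, c ∈ C ∧ c - v ∈ S := by
      intro v
      obtain ⟨c, ⟨h1, h2⟩, h3⟩ := hC v
      exact ⟨c, ⟨h1, (hadj v c).1 h2⟩, fun y hy => h3 y ⟨hy.1, (hadj v y).2 hy.2⟩⟩
    have hbijmem : ∀ a : ZMod n × ZMod n, a ∈ TS ×ˢ TC →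
        a.1 + a.2 ∈ (Finset.univ : Finset (ZMod n)) := fun _ _ => Finset.mem_univ _
    have hbijinj : ∀ a₁ (h₁ : a₁ ∈ TS ×ˢ TC) a₂ (h₂ : a₂ ∈ TS ×ˢ TC),
        a₁.1 + a₁.2 = a₂.1 + a₂.2 → a₁ = a₂ := by
      rintro ⟨s₁, c₁⟩ hm1 ⟨s₂, c₂⟩ hm2 heq
      rw [Finset.mem_product] at hm1 hm2
      obtain ⟨hs₁, hc₁⟩ := hm1; obtain ⟨hs₂, hc₂⟩ := hm2
      simp only at heq hs₁ hc₁ hs₂ hc₂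
      have k1 : c₁ ∈ C ∧ c₁ - (s₁ + c₁) ∈ S := ⟨(hmemTC _).1 hc₁, by
        have he : c₁ - (s₁ + c₁) = -s₁ := by abel
        rw [he]; exact hinv _ ((hmemTS _).1 hs₁)⟩
      have k2 : c₂ ∈ C ∧ c₂ - (s₁ + c₁) ∈ S := ⟨(hmemTC _).1 hc₂, by
        have he : c₂ - (s₁ + c₁) = -s₂ := by rw [heq]; abel
        rw [he]; exact hinv _ ((hmemTS _).1 hs₂)⟩
      obtain ⟨c, _, huniq⟩ := hdecomp (s₁ + c₁)
      have hc : c₁ = c₂ := (huniq c₁ k1).trans (huniq c₂ k2).symm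
      have hsx : s₁ = s₂ := by
        rw [hc] at heq
        exact add_right_cancel heq
      exact Prod.ext hsx hc
    have hbijsurj : ∀ v ∈ (Finset.univ : Finset (ZMod n)),
        ∃ a, ∃ (_ : a ∈ TS ×ˢ TC), a.1 + a.2 = v := by
      intro v _
      obtain ⟨c, ⟨hcC, hcS⟩, _⟩ := hdecomp v
      refine ⟨(v - c, c), ?_, by simp⟩
      rw [Finset.mem_product]
      constructor
      · rw [hmemTS]
        have := hinv _ hcS; rwa [neg_sub] at this
      · rw [hmemTC]; exact hcC
    have hTCcard : TC.card = m := by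
      have hb := Finset.card_bij (fun (a : ZMod n × ZMod n) (_ : a ∈ TS ×ˢ TC) => a.1 + a.2)
        hbijmem hbijinj hbijsurj
      rw [Finset.card_product, hTScard, Finset.card_univ, ZMod.card] at hb
      exact Nat.eq_of_mul_eq_mul_left hpq0 (hb.trans hm)
    have hsumbij : ∀ w : ℂ, w ^ n = 1 →
        (∑ x ∈ TS, w ^ x.val) * (∑ x ∈ TC, w ^ x.val) = ∑ v : ZMod n, w ^ v.val := by
      intro w hwn
      rw [Finset.sum_mul_sum, ← Finset.sum_product']
      exact Finset.sum_bij (fun (a : ZMod n × ZMod n) (_ : a ∈ TS ×ˢ TC) => a.1 + a.2)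
        hbijmem hbijinj hbijsurj (fun a _ => (hfmul w hwn a.1 a.2).symm)
    -- primitive root
    obtain ⟨ζ, hζ⟩ : ∃ z : ℂ, IsPrimitiveRoot z (p * q) :=
      ⟨_, Complex.isPrimitiveRoot_exp _ hpq0.ne'⟩
    have hζ1 : ζ ^ (p * q) = 1 := hζ.pow_eq_one
    have hζn : ζ ^ n = 1 := by rw [hm, pow_mul, hζ1, one_pow]
    -- period element of order a prime dividing p*q
    obtain ⟨h₁, hh₁mem, hh₁0⟩ : ∃ x, x ∈ periods S ∧ x ≠ 0 := by
      by_contra hcon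
      push_neg at hcon
      exact hper ((AddSubgroup.eq_bot_iff_forall _).2 (fun x hx => hcon x hx))
    have hord₁ : addOrderOf h₁ ≠ 1 := by
      intro h1
      apply hh₁0
      have h2 := addOrderOf_nsmul_eq_zero h₁
      rwa [h1, one_nsmul] at h2
    obtain ⟨ℓ, hℓp, hℓdvd⟩ := Nat.exists_prime_and_dvd hord₁
    have hord₁pos : 0 < addOrderOf h₁ := addOrderOf_pos h₁
    set h : ZMod n := (addOrderOf h₁ / ℓ) • h₁ with hhdef
    have hhmem : h ∈ periods S := AddSubgroup.nsmul_mem _ hh₁mem _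
    have hhper : ∀ x : ZMod n, x + h ∈ S ↔ x ∈ S := hhmem
    have hh0 : h ≠ 0 := by
      intro hz
      have hdvd2 : addOrderOf h₁ ∣ addOrderOf h₁ / ℓ := addOrderOf_dvd_iff_nsmul_eq_zero.2 hz
      have hlt : addOrderOf h₁ / ℓ < addOrderOf h₁ := Nat.div_lt_self hord₁pos hℓp.one_lt
      have hpos : 0 < addOrderOf h₁ / ℓ := Nat.div_pos (Nat.le_of_dvd hord₁pos hℓdvd) hℓp.pos
      exact absurd (Nat.le_of_dvd hpos hdvd2) (by omega)
    have hℓh : ℓ • h = 0 := by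
      rw [hhdef, ← mul_nsmul, Nat.div_mul_cancel hℓdvd, addOrderOf_nsmul_eq_zero]
    have hordh : addOrderOf h = ℓ := by
      have hdl : addOrderOf h ∣ ℓ := addOrderOf_dvd_iff_nsmul_eq_zero.2 hℓh
      rcases (hℓp.eq_one_or_self_of_dvd _ hdl) with h1 | h1
      · exfalso
        apply hh0
        have h2 := addOrderOf_nsmul_eq_zero h
        rwa [h1, one_nsmul] at h2
      · exact h1
    have hℓpq : ℓ ∣ p * q := by
      have hd := addOrder_dvd_ncard' hhper
      rwa [hordh, hcard] at hd
    have hpqh : (p * q) • h = 0 := addOrderOf_dvd_iff_nsmul_eq_zero.1 (hordh ▸ hℓpq)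
    -- the vanishing of character sums over S
    have hvanish : ∀ t : ℕ, 0 < t → t < p * q → ∑ x ∈ TS, (ζ ^ t) ^ x.val = 0 := by
      intro t ht0 htpq
      set w : ℂ := ζ ^ t with hw
      have hwn : w ^ n = 1 := by rw [hw, ← pow_mul, mul_comm, pow_mul, hζn, one_pow]
      have hw1 : w ≠ 1 := by
        intro h1
        rw [hw] at h1
        have := (hζ.pow_eq_one_iff_dvd t).1 h1
        exact absurd (Nat.le_of_dvd ht0 this) (by omega)
      by_cases hg : Nat.Coprime (p * q) t
      · -- full order: use periodicity
        have hχh : w ^ h.val ≠ 1 := by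
          intro h1
          rw [hw, ← pow_mul] at h1
          have hd1 : (p * q) ∣ t * h.val := (hζ.pow_eq_one_iff_dvd _).1 h1
          have hd2 : (p * q) ∣ h.val := hg.dvd_of_dvd_mul_left hd1
          obtain ⟨k, hk⟩ := hd2
          have h2 : ((p * q * h.val : ℕ) : ZMod n) = 0 := by
            push_cast
            rw [ZMod.natCast_val, ZMod.cast_id]
            have h3 := hpqh
            rw [nsmul_eq_mul] at h3
            push_cast at h3
            exact h3
          have h3 : n ∣ p * q * h.val := (ZMod.natCast_eq_zero_iff _ _).1 h2
          rw [hk, hm] at h3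
          have h4 : m ∣ p * q * k := (mul_dvd_mul_iff_left hpq0.ne').1 h3
          have h5 : m ∣ k := (hcop'.symm).dvd_of_dvd_mul_left h4
          have h6 : p * q * m ∣ h.val := by
            rw [hk]
            exact mul_dvd_mul_left (p * q) h5
          have hlt : h.val < p * q * m := by
            have := ZMod.val_lt h
            omega
          have h7 := Nat.eq_zero_of_dvd_of_lt h6 hlt
          exact hh0 ((ZMod.val_eq_zero h).1 h7)
        have htrans : ∑ x ∈ TS, w ^ x.val = w ^ h.val * ∑ x ∈ TS, w ^ x.val := by
          rw [Finset.mul_sum]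
          apply Finset.sum_nbij' (fun x => x - h) (fun x => x + h)
          · intro a ha
            rw [hmemTS] at ha ⊢
            apply (hhper (a - h)).1
            rwa [sub_add_cancel]
          · intro a ha
            rw [hmemTS] at ha ⊢
            exact (hhper a).2 ha
          · intro a _; exact sub_add_cancel a h
          · intro a _; exact add_sub_cancel_right a h
          · intro a _
            have he := hfmul w hwn (a - h) h
            rw [sub_add_cancel] at he
            rw [he]
            ring
        have hz : (w ^ h.val - 1) * ∑ x ∈ TS, w ^ x.val = 0 := by
          rw [sub_mul, one_mul, ← htrans, sub_self]
        rcases mul_eq_zero.1 hz with hc | hc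
        · exact absurd (by rwa [sub_eq_zero] at hc) hχh
        · exact hc
      · -- prime order: use the code side
        have hprod : (∑ x ∈ TS, w ^ x.val) * (∑ x ∈ TC, w ^ x.val) = 0 := by
          rw [hsumbij w hwn, sum_val_pow', geom_zero' hw1 hwn]
        rcases mul_eq_zero.1 hprod with hc | hc
        · exact hc
        · exfalso
          set g : ℕ := Nat.gcd (p * q) t with hgdef
          have hgdvd : g ∣ p * q := Nat.gcd_dvd_left _ _
          have hgpos : 0 < g := Nat.gcd_pos_of_pos_right _ ht0
          have hg1 : g ≠ 1 := hg
          set o : ℕ := p * q / g with hodef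
          have hog : p * q = g * o := (Nat.mul_div_cancel' hgdvd).symm
          have ho1 : o ≠ 1 := by
            intro h1
            rw [h1, mul_one] at hog
            have hdt : p * q ∣ t := by rw [hog]; exact Nat.gcd_dvd_right (p * q) t
            have := Nat.le_of_dvd ht0 hdt
            omega
          have hopq : o ≠ p * q := by
            intro h1
            rw [h1] at hog
            apply hg1
            have hg' : g * (p * q) = 1 * (p * q) := by rw [one_mul, ← hog]
            exact Nat.eq_of_mul_eq_mul_right hpq0 hg'
          have hodvdpq : o ∣ p * q := ⟨g, by rw [hog]; ring⟩
          have hoprime : o.Prime := by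
            rcases dvd_prime_mul_prime' hp hq hodvdpq with h1 | h1 | h1 | h1
            · exact absurd h1 ho1
            · rw [h1]; exact hp
            · rw [h1]; exact hq
            · exact absurd h1 hopq
          have hwprim : IsPrimitiveRoot w o := by
            have h1 : IsPrimitiveRoot (ζ ^ g) o := hζ.pow hpq0 hog
            have h2 : (t / g).Coprime o := by
              have h3 := Nat.coprime_div_gcd_div_gcd (m := p * q) (n := t) hgpos
              exact h3.symm
            have h3 := h1.pow_of_coprime (t / g) h2
            rwa [← pow_mul, Nat.mul_div_cancel' (Nat.gcd_dvd_right (p * q) t)] at h3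
          have hodvdm : o ∣ TC.card :=
            prime_dvd_card_of_vanishing_sum' hoprime hwprim TC ZMod.val hc
          rw [hTCcard] at hodvdm
          have h4 : o ∣ 1 := hcop' ▸ Nat.dvd_gcd hodvdpq hodvdm
          exact hoprime.ne_one (Nat.dvd_one.mp h4)
    -- the final double counting
    set u : ℕ := p * q - s.val % (p * q) with hu
    have hus : p * q ∣ u + s.val := by
      have h1 := Nat.mod_add_div (s.val) (p * q)
      have h2 : s.val % (p * q) < p * q := Nat.mod_lt _ hpq0
      refine ⟨1 + s.val / (p * q), ?_⟩
      rw [hu, Nat.mul_add, Nat.mul_one]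
      omega
    have hus' : p * q ∣ u + s'.val := by
      have h1 : (u + s.val) ≡ (u + s'.val) [MOD p * q] := Nat.ModEq.add_left u hmod
      have h2 : (u + s.val) ≡ 0 [MOD p * q] := (Nat.modEq_zero_iff_dvd).2 hus
      exact (Nat.modEq_zero_iff_dvd).1 (h1.symm.trans h2)
    set K : Finset (ZMod n) := TS.filter (fun x => (p * q) ∣ u + x.val) with hK
    have hA1 : ∑ t ∈ Finset.range (p * q), (ζ ^ t) ^ u * ∑ x ∈ TS, (ζ ^ t) ^ x.val
        = ((p * q : ℕ) : ℂ) := by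
      rw [Finset.sum_eq_single 0 (fun t ht ht0 => by
          rw [hvanish t (Nat.pos_of_ne_zero ht0) (Finset.mem_range.1 ht), mul_zero])
        (fun hnot => absurd (Finset.mem_range.2 hpq0) hnot)]
      simp [hTScard]
    have hA2 : ∑ t ∈ Finset.range (p * q), (ζ ^ t) ^ u * ∑ x ∈ TS, (ζ ^ t) ^ x.val
        = (K.card : ℂ) * ((p * q : ℕ) : ℂ) := by
      have hst : ∀ t ∈ Finset.range (p * q), (ζ ^ t) ^ u * ∑ x ∈ TS, (ζ ^ t) ^ x.val
          = ∑ x ∈ TS, (ζ ^ (u + x.val)) ^ t := by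
        intro t _
        rw [Finset.mul_sum]
        apply Finset.sum_congr rfl
        intro x _
        rw [← pow_add, ← pow_mul, ← pow_mul']
      rw [Finset.sum_congr rfl hst, Finset.sum_comm]
      have hinner : ∀ x ∈ TS, ∑ t ∈ Finset.range (p * q), (ζ ^ (u + x.val)) ^ t
          = if (p * q) ∣ u + x.val then ((p * q : ℕ) : ℂ) else 0 := by
        intro x _
        by_cases hdv : (p * q) ∣ u + x.val
        · rw [if_pos hdv, (hζ.pow_eq_one_iff_dvd _).2 hdv]
          simp
        · rw [if_neg hdv]
          apply geom_zero'
          · intro h1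
            exact hdv ((hζ.pow_eq_one_iff_dvd _).1 h1)
          · rw [← pow_mul, mul_comm, pow_mul, hζ1, one_pow]
      rw [Finset.sum_congr rfl hinner, Finset.sum_ite, Finset.sum_const_zero, add_zero,
        Finset.sum_const, nsmul_eq_mul]
    have hKcard : 2 ≤ K.card := by
      have hsub : ({s, s'} : Finset (ZMod n)) ⊆ K := by
        intro x hx
        rcases Finset.mem_insert.1 hx with rfl | hx
        · exact Finset.mem_filter.2 ⟨(hmemTS _).2 hs, hus⟩
        · rw [Finset.mem_singleton] at hx
          subst hx
          exact Finset.mem_filter.2 ⟨(hmemTS _).2 hs', hus'⟩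
      have hc2 := Finset.card_le_card hsub
      rwa [Finset.card_insert_of_notMem (by simpa using hne), Finset.card_singleton] at hc2
    have hfinal : (K.card : ℂ) = 1 := by
      have h1 : (K.card : ℂ) * ((p * q : ℕ) : ℂ) = 1 * ((p * q : ℕ) : ℂ) := by
        rw [one_mul, ← hA2, hA1]
      have h2 : ((p * q : ℕ) : ℂ) ≠ 0 := by
        exact_mod_cast hpq0.ne'
      exact mul_right_cancel₀ h2 h1
    have : K.card = 1 := by exact_mod_cast hfinal
    omega
  · -- easy direction
    intro hdist
    have hinj : ∀ s ∈ S, ∀ s' ∈ S, ψ s = ψ s' → s = s' := by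
      intro s hs s' hs' hss
      by_contra hne
      exact hdist s hs s' hs' hne ((hmodiff s s').2 hss)
    have himage : TS.image ψ = Finset.univ := by
      apply Finset.eq_univ_of_card
      rw [Finset.card_image_of_injOn, hTScard, ZMod.card (p * q)]
      intro a ha b hb
      exact hinj a ((hmemTS a).1 ha) b ((hmemTS b).1 hb)
    have hsurj : ∀ a : ZMod (p * q), ∃ s ∈ S, ψ s = a := by
      intro a
      have ha : a ∈ TS.image ψ := by rw [himage]; exact Finset.mem_univ a
      obtain ⟨s, hsT, hsa⟩ := Finset.mem_image.1 ha
      exact ⟨s, (hmemTS s).1 hsT, hsa⟩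
    refine ⟨{x | ψ x = 0}, ?_⟩
    intro v
    obtain ⟨s, hs, hψs⟩ := hsurj (-ψ v)
    refine ⟨v + s, ⟨?_, ?_⟩, ?_⟩
    · show ψ (v + s) = 0
      rw [map_add, hψs]; ring
    · rw [hadj]
      rwa [add_sub_cancel_left]
    · rintro c' ⟨hc', hadj'⟩
      have hs' : c' - v ∈ S := (hadj v c').1 hadj'
      have hψc' : ψ c' = 0 := hc'
      have heq : ψ (c' - v) = ψ s := by
        rw [map_sub, hψc', hψs]; ring
      have hcv := hinj _ hs' _ hs heq
      rw [sub_eq_iff_eq_add] at hcv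
      rw [hcv]; ring
end

section
/- Let n ∈ {p^k, p^k·q, p²q², pqr, p²qr, pqrs : p, q, r, s are distinct primes and k ≥ 1}, and let S be an inverse-closed subset of ℤ_n∖{0} such that ⟨S⟩ = ℤ_n, |S| divides n, and |S| and n/|S| are coprime. Then Cay(ℤ_n, S) admits a total perfect code if and only if s ≢ s′ (mod |S|) for any two distinct s, s′ ∈ S. -/
/-- Membership in the set `{p^k, p^k q, p²q², pqr, p²qr, pqrs : p, q, r, s distinct primes, k ≥ 1}`. -/
def InN (n : ℕ) : Prop :=
  ∃ p q r s k : ℕ, p.Prime ∧ q.Prime ∧ r.Prime ∧ s.Prime ∧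
    p ≠ q ∧ p ≠ r ∧ p ≠ s ∧ q ≠ r ∧ q ≠ s ∧ r ≠ s ∧ 1 ≤ k ∧
    (n = p ^ k ∨ n = p ^ k * q ∨ n = p ^ 2 * q ^ 2 ∨ n = p * q * r ∨
      n = p ^ 2 * q * r ∨ n = p * q * r * s)

open Finset AddMonoidAlgebra

section Factorization

variable {G : Type*} [AddCommGroup G]

theorem isTotalPerfectCode_cayley_iff {S C : Set G} (h0 : (0 : G) ∉ S)
    (hinv : ∀ s ∈ S, -s ∈ S) :
    IsTotalPerfectCode (cayley S) C ↔ IsFactorization S C := by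
  have hadj : ∀ v c, (cayley S).Adj v c ↔ v - c ∈ S := fun v c => by
    rw [cayley, SimpleGraph.fromRel_adj]
    refine ⟨fun ⟨_, h⟩ => h.elim (fun h => by simpa using hinv _ h) id, fun h => ⟨?_, Or.inr h⟩⟩
    rintro rfl
    exact h0 (by simpa using h)
  refine forall_congr' fun v => ⟨?_, ?_⟩
  · rintro ⟨c, ⟨hc, hvc⟩, huniq⟩
    refine ⟨(v - c, c), ⟨(hadj v c).1 hvc, hc, sub_add_cancel v c⟩, ?_⟩
    rintro ⟨s, c'⟩ ⟨hs, hc', rfl⟩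
    obtain rfl : c' = c := huniq c' ⟨hc', (hadj _ _).2 (by simpa using hs)⟩
    simp
  · rintro ⟨⟨s, c⟩, ⟨hs, hc, rfl⟩, huniq⟩
    refine ⟨c, ⟨hc, (hadj _ _).2 (by simpa using hs)⟩, fun c' ⟨hc', hvc'⟩ => ?_⟩
    exact congrArg Prod.snd (huniq (s + c - c', c') ⟨(hadj _ _).1 hvc', hc', sub_add_cancel _ _⟩)

theorem isFactorization_iff_bijOn {A B : Set G} :
    IsFactorization A B ↔ Set.BijOn (fun x : G × G => x.1 + x.2) (A ×ˢ B) Set.univ := by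
  refine ⟨fun h => ⟨Set.mapsTo_univ _ _, ?_, fun g _ => ?_⟩, fun h g => ?_⟩
  · rintro x hx y hy hxy
    obtain ⟨z, -, hz⟩ := h (x.1 + x.2)
    exact (hz x ⟨hx.1, hx.2, rfl⟩).trans (hz y ⟨hy.1, hy.2, hxy.symm⟩).symm
  · obtain ⟨x, ⟨hxA, hxB, hx⟩, -⟩ := h g
    exact ⟨x, ⟨hxA, hxB⟩, hx⟩
  · obtain ⟨x, hx, rfl⟩ := h.surjOn (Set.mem_univ g)
    exact ⟨x, ⟨hx.1, hx.2, rfl⟩, fun y hy => h.injOn ⟨hy.1, hy.2.1⟩ hx hy.2.2⟩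

variable {H F : Type*} [AddCommGroup H] [FunLike F G H] [AddMonoidHomClass F G H]

theorem isFactorization_preimage_zero_of_bijOn {A : Set G} {φ : F}
    (hφ : Set.BijOn φ A Set.univ) : IsFactorization A (φ ⁻¹' {0}) := by
  intro g
  obtain ⟨a, ha, hag⟩ := hφ.surjOn (Set.mem_univ (φ g))
  refine ⟨(a, g - a), ⟨ha, by simp [hag], add_sub_cancel a g⟩, ?_⟩
  rintro ⟨a', k⟩ ⟨ha', hk, rfl⟩
  obtain rfl : a' = a := hφ.injOn ha' ha (by simpa [hag] using hk)
  simp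

theorem IsFactorization.surjOn_range {A B : Set G} (h : IsFactorization A B) {φ : F}
    (hB : ∀ b ∈ B, φ b = 0) : Set.SurjOn φ A (Set.range φ) := by
  rintro _ ⟨g, rfl⟩
  obtain ⟨⟨a, b⟩, ⟨ha, hb, rfl⟩, -⟩ := h g
  exact ⟨a, ha, by simpa using hB b hb⟩

theorem injOn_and_isFactorization_image {A B : Set G} {f : G → G}
    (h : Set.BijOn (fun x : G × G => x.1 + f x.2) (A ×ˢ B) Set.univ) :
    Set.InjOn f B ∧ IsFactorization A (f '' B) := by
  obtain ⟨⟨a, _⟩, ⟨ha, -⟩, -⟩ := h.surjOn (Set.mem_univ 0)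
  refine ⟨fun b hb b' hb' hbb' => ?_, isFactorization_iff_bijOn.2
    ⟨Set.mapsTo_univ _ _, ?_, fun g _ => ?_⟩⟩
  · exact congrArg Prod.snd (h.injOn (⟨ha, hb⟩ : (a, b) ∈ A ×ˢ B)
      (⟨ha, hb'⟩ : (a, b') ∈ A ×ˢ B) (by simp only [hbb']))
  · rintro ⟨a₁, -⟩ ⟨ha₁, b₁, hb₁, rfl⟩ ⟨a₂, -⟩ ⟨ha₂, b₂, hb₂, rfl⟩ heq
    have := h.injOn (⟨ha₁, hb₁⟩ : (a₁, b₁) ∈ A ×ˢ B) (⟨ha₂, hb₂⟩ : (a₂, b₂) ∈ A ×ˢ B) heq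
    simp_all
  · obtain ⟨⟨a, b⟩, ⟨ha, hb⟩, rfl⟩ := h.surjOn (Set.mem_univ g)
    exact ⟨(a, f b), ⟨ha, b, hb, rfl⟩, rfl⟩

end Factorization

section GroupAlgebra

variable {k G ι : Type*} [Semiring k]

theorem coeff_sum_single_one [DecidableEq G] (s : Finset ι) (f : ι → G) (g : G) :
    (∑ i ∈ s, single (f i) (1 : k)).coeff g = #{i ∈ s | f i = g} := by
  simp only [coeff_sum, coeff_single, Finset.sum_apply', Finsupp.single_apply, ← sum_boole]

theorem sum_single_one_mul_sum_single_one [Add G] (A : Finset G) (B : Finset ι) (f : ι → G) :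
    (∑ a ∈ A, single a (1 : k)) * ∑ b ∈ B, single (f b) 1 =
      ∑ x ∈ A ×ˢ B, single (x.1 + f x.2) 1 := by
  simp only [sum_mul_sum, sum_product, single_mul_single, mul_one]

theorem sum_univ_single_one_mul_sum_single_one [AddGroup G] [Fintype G] (s : Finset ι)
    (f : ι → G) :
    (∑ g : G, single g (1 : k)) * ∑ i ∈ s, single (f i) 1 = (#s : k) • ∑ g : G, single g 1 := by
  have hshift : ∀ x : G, (∑ g : G, single g (1 : k)) * single x 1 = ∑ g : G, single g 1 := by
    intro x
    simp only [sum_mul, single_mul_single, mul_one]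
    exact Fintype.sum_equiv (Equiv.addRight x) _ _ fun _ => rfl
  simp only [mul_sum, hshift, sum_const, nsmul_eq_mul, Nat.cast_smul_eq_nsmul]

end GroupAlgebra

section Multiplier

variable {G : Type*} [AddCommGroup G] [Fintype G]

theorem IsFactorization.card_mul_card {A B : Finset G} (h : IsFactorization (A : Set G) B) :
    #A * #B = Fintype.card G := by
  rw [← card_product, ← card_univ]
  obtain ⟨-, hinj, hsurj⟩ := isFactorization_iff_bijOn.1 h
  exact card_nbij _ (fun _ _ => mem_univ _) (by simpa using hinj) (by simpa using hsurj)

theorem IsFactorization.sum_single_add_nsmul_eq_sum_univ {A B : Finset G} {p : ℕ} [Fact p.Prime]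
    (h : IsFactorization (A : Set G) B) (hpB : ¬ p ∣ #B) :
    ∑ x ∈ A ×ˢ B, single (x.1 + p • x.2) (1 : ZMod p) = ∑ g : G, single g 1 := by
  have : CharP (AddMonoidAlgebra (ZMod p) G) p := charP_of_injective_algebraMap' (ZMod p) p
  set δ : Finset G → AddMonoidAlgebra (ZMod p) G := fun s => ∑ x ∈ s, single x 1
  have hAB : δ A * δ B = δ univ := by
    obtain ⟨-, hinj, hsurj⟩ := isFactorization_iff_bijOn.1 h
    rw [sum_single_one_mul_sum_single_one]
    exact sum_nbij _ (fun _ _ => mem_univ _) (by simpa using hinj) (by simpa using hsurj)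
      fun _ _ => rfl
  have hfrob : δ B ^ p = ∑ b ∈ B, single (p • b) 1 := by
    simp only [δ, sum_pow_char, single_pow, one_pow]
  have hpow : ∀ m, δ univ * δ B ^ m = ((#B : ZMod p) ^ m) • δ univ := by
    intro m
    induction m with
    | zero => simp
    | succ m ih =>
      rw [pow_succ, ← mul_assoc, ih, smul_mul_assoc, sum_univ_single_one_mul_sum_single_one,
        smul_smul, pow_succ]
  calc _ = δ A * δ B * δ B ^ (p - 1) := by
        rw [← sum_single_one_mul_sum_single_one, ← hfrob, mul_assoc, ← pow_succ',
          Nat.sub_add_cancel (Fact.out : p.Prime).one_le]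
    _ = δ univ := by
        rw [hAB, hpow, ZMod.pow_card_sub_one_eq_one (by rwa [Ne, ZMod.natCast_eq_zero_iff]),
          one_smul]

theorem IsFactorization.bijOn_add_nsmul_of_prime {A B : Finset G} {p : ℕ} (hp : p.Prime)
    (h : IsFactorization (A : Set G) B) (hpB : ¬ p ∣ #B) :
    Set.BijOn (fun x : G × G => x.1 + p • x.2) ((A : Set G) ×ˢ (B : Set G)) Set.univ := by
  let := Classical.decEq G
  have : Fact p.Prime := ⟨hp⟩
  have hsurj : Set.SurjOn (fun x : G × G => x.1 + p • x.2) (A ×ˢ B : Finset (G × G)) Set.univ := by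
    intro g _
    have hg : (#{x ∈ A ×ˢ B | x.1 + p • x.2 = g} : ZMod p) = #{x ∈ univ | x = g} := by
      rw [← coeff_sum_single_one, ← coeff_sum_single_one,
        h.sum_single_add_nsmul_eq_sum_univ hpB]
    rw [filter_eq', if_pos (mem_univ g), card_singleton, Nat.cast_one] at hg
    obtain ⟨x, hx⟩ : {x ∈ A ×ˢ B | x.1 + p • x.2 = g}.Nonempty := by
      rw [← card_ne_zero]
      rintro hzero
      rw [hzero, Nat.cast_zero] at hg
      exact zero_ne_one hg
    exact ⟨x, (mem_filter.1 hx).1, (mem_filter.1 hx).2⟩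
  rw [← coe_product]
  refine ⟨Set.mapsTo_univ _ _, ?_, hsurj⟩
  refine injOn_of_surjOn_of_card_le (t := univ) _ (fun _ _ => mem_univ _) (by simpa using hsurj) ?_
  rw [card_product, h.card_mul_card, card_univ]

theorem IsFactorization.injOn_and_isFactorization_nsmul_image {A : Finset G} (d : ℕ) :
    ∀ {B : Finset G}, IsFactorization (A : Set G) B → d.Coprime #B →
      Set.InjOn (d • ·) (B : Set G) ∧ IsFactorization (A : Set G) ((d • ·) '' B) := by
  classical
  induction d using induction_on_primes with
  | zero =>
    intro B h hd
    obtain ⟨b, rfl⟩ := card_eq_one.1 ((Nat.coprime_zero_left _).1 hd)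
    refine ⟨by simp, fun g => ?_⟩
    obtain ⟨⟨a, b'⟩, ⟨ha, hb', hab⟩, -⟩ := h (g + b)
    obtain rfl : b' = b := by simpa using hb'
    obtain rfl : a = g := add_right_cancel hab
    refine ⟨(a, 0), ⟨ha, by simp, add_zero a⟩, ?_⟩
    rintro ⟨a', c⟩ ⟨-, hc, rfl⟩
    obtain rfl : c = 0 := by simpa [eq_comm] using hc
    simp
  | one => intro B h _; simpa using h
  | prime_mul p d hp ih =>
    intro B h hd
    have hpB : ¬ p ∣ #B := (Nat.Prime.coprime_iff_not_dvd hp).1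
      (Nat.Coprime.coprime_dvd_left (dvd_mul_right p d) hd)
    obtain ⟨hinjp, hfacp⟩ := injOn_and_isFactorization_image (h.bijOn_add_nsmul_of_prime hp hpB)
    have hcard : #(B.image (p • ·)) = #B := card_image_of_injOn hinjp
    obtain ⟨hinjd, hfacd⟩ := ih (B := B.image (p • ·)) (by rwa [coe_image])
      (by rw [hcard]; exact Nat.Coprime.coprime_dvd_left (dvd_mul_left d p) hd)
    have hcomp : (fun b : G => (p * d) • b) = (d • ·) ∘ (p • ·) := by
      ext b; simp [mul_comm p d, mul_smul]
    rw [coe_image] at hinjd hfacd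
    rw [hcomp, Set.image_comp]
    exact ⟨hinjd.comp hinjp (Set.mapsTo_image _ _), hfacd⟩

end Multiplier

section Cyclic

variable {n : ℕ} [NeZero n]

theorem injOn_castHom_iff {m : ℕ} (h : m ∣ n) (S : Set (ZMod n)) :
    Set.InjOn (ZMod.castHom h (ZMod m)) S ↔
      ∀ s ∈ S, ∀ s' ∈ S, s ≠ s' → ¬ s.val ≡ s'.val [MOD m] := by
  simp only [Set.InjOn, ZMod.castHom_apply, ZMod.cast_eq_val, ZMod.natCast_eq_natCast_iff]
  exact forall₂_congr fun _ _ => forall₂_congr fun _ _ => not_imp_not.symm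

theorem IsFactorization.injOn_castHom {A B : Finset (ZMod n)}
    (h : IsFactorization (A : Set (ZMod n)) B) (hA : #A ∣ n) (hcop : (#A).Coprime (n / #A)) :
    Set.InjOn (ZMod.castHom hA (ZMod #A)) A := by
  have hcard : #A * #B = n := by simpa using h.card_mul_card
  have hA0 : 0 < #A := Nat.pos_of_ne_zero fun h0 => NeZero.ne n (by simp [← hcard, h0])
  have : NeZero #A := ⟨hA0.ne'⟩
  rw [Nat.div_eq_of_eq_mul_right hA0 hcard.symm] at hcop
  have hker : ∀ x ∈ (#A • ·) '' (B : Set (ZMod n)), ZMod.castHom hA (ZMod #A) x = 0 := by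
    rintro _ ⟨b, -, rfl⟩
    rw [map_nsmul, nsmul_eq_mul, ZMod.natCast_self, zero_mul]
  have hsurj := (h.injOn_and_isFactorization_nsmul_image #A hcop).2.surjOn_range hker
  rw [(ZMod.castHom_surjective hA).range_eq] at hsurj
  exact injOn_of_surjOn_of_card_le (t := univ) _ (fun _ _ => mem_univ _) (by simpa using hsurj)
    (by simp)

end Cyclic

theorem totalPerfectCode_iff_good_orders_general (n : ℕ)
    (S : Set (ZMod n)) (h0 : (0 : ZMod n) ∉ S) (hinv : ∀ s ∈ S, -s ∈ S)
    (hdvd : S.ncard ∣ n) (hcop : Nat.Coprime S.ncard (n / S.ncard)) :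
    (∃ C : Set (ZMod n), IsTotalPerfectCode (cayley S) C) ↔
      ∀ s ∈ S, ∀ s' ∈ S, s ≠ s' → ¬ (s.val ≡ s'.val [MOD S.ncard]) := by
  -- In `ZMod 0 = ℤ`, `n / |S| = 0` would force `|S| = 1`, but `{0}` is the only inverse-closed
  -- singleton of `ℤ`.
  have : NeZero n := ⟨by
    rintro rfl
    obtain ⟨s, rfl⟩ := Set.ncard_eq_one.1 ((Nat.coprime_zero_right _).1 (by simpa using hcop))
    have hs := (ZMod.neg_eq_self_iff s).1 (hinv s rfl)
    simp only [mul_eq_zero, OfNat.ofNat_ne_zero, ZMod.val_eq_zero, false_or, or_self] at hs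
    exact h0 (hs ▸ rfl)⟩
  obtain ⟨A, rfl⟩ := S.toFinite.exists_finset_coe
  rw [Set.ncard_coe_finset] at hdvd hcop ⊢
  have : NeZero #A := ⟨fun hA => NeZero.ne n (Nat.eq_zero_of_zero_dvd (hA ▸ hdvd))⟩
  simp_rw [isTotalPerfectCode_cayley_iff h0 hinv, ← injOn_castHom_iff hdvd]
  refine ⟨fun ⟨C, hC⟩ => ?_, fun hinj => ?_⟩
  · obtain ⟨B, rfl⟩ := C.toFinite.exists_finset_coe
    exact hC.injOn_castHom hdvd hcop
  · have hbij : Set.BijOn (ZMod.castHom hdvd (ZMod #A)) A Set.univ := ⟨Set.mapsTo_univ _ _, hinj,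
      by simpa using surjOn_of_injOn_of_card_le (t := univ) _ (fun _ _ => mem_univ _) hinj (by simp)⟩
    exact ⟨_, isFactorization_preimage_zero_of_bijOn hbij⟩

/-- Theorem 5.6: let `n ∈ {p^k, p^k q, p²q², pqr, p²qr, pqrs}` and `S` an
inverse-closed generating subset of `ℤ_n ∖ {0}` such that `|S| ∣ n` and `|S|` is
coprime to `n/|S|`. Then `Cay(ℤ_n, S)` admits a total perfect code iff
`s ≢ s' (mod |S|)` for any two distinct `s, s' ∈ S`. -/
theorem totalPerfectCode_iff_good_orders (n : ℕ) (hN : InN n)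
    (S : Set (ZMod n)) (h0 : (0 : ZMod n) ∉ S) (hinv : ∀ s ∈ S, -s ∈ S)
    (hgen : AddSubgroup.closure S = ⊤)
    (hdvd : S.ncard ∣ n) (hcop : Nat.Coprime S.ncard (n / S.ncard)) :
    (∃ C : Set (ZMod n), IsTotalPerfectCode (cayley S) C) ↔
      ∀ s ∈ S, ∀ s' ∈ S, s ≠ s' → ¬ (s.val ≡ s'.val [MOD S.ncard]) :=
  totalPerfectCode_iff_good_orders_general n S h0 hinv hdvd hcop
end
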